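/- arXiv:math/0601679 — 2 statements merged into one kernel-verified Lean document; each statement's English description precedes it below -/
import Mathlib

section
/- Let (X,d,μ) be a metric measure space with μ doubling with constant C_d, and let S ⊂ X be a regular set with constants θ_S, δ_S. Then μ(cl(S) ∖ S) = 0, where cl(S) denotes the closure of S in X. -/
/-!
Since `μ` is doubling and finite on bounded sets, an `ε`-separated subset of a ball is finite
(the disjoint `ε / 2`-balls around its points have measure bounded below), so balls are totally
bounded and `X` is second countable; hence Lebesgue's density theorem holds for `μ`: at almost
every point outside `S` the density of `S` in `closedBall x r` tends to `0`. At a point `x` of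
`closure S`, pick `y ∈ S` with `dist x y < r / 2`: then `closedBall x r ⊆ ball y (2 r)`, and
doubling twice plus regularity at `y` give
`μ (closedBall x r) ≤ Cd ^ 2 * θ * μ (S ∩ closedBall x r)` for `r ≤ 2 δ`, so the density of
`S` at `x` stays above `(Cd ^ 2 * θ)⁻¹`.
-/

open MeasureTheory Metric Set NNReal ENNReal Bornology

def IsDoublingMeasure {X : Type*} [MetricSpace X] [MeasurableSpace X]
    (μ : Measure X) (Cd : ℝ≥0) : Prop :=
  ∀ (x : X) (r : ℝ), 0 < r → μ (ball x (2 * r)) ≤ (Cd : ℝ≥0∞) * μ (ball x r)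

def IsRevDoublingMeasure {X : Type*} [MetricSpace X] [MeasurableSpace X]
    (μ : Measure X) (Crd : ℝ≥0) : Prop :=
  ∀ (x : X) (r : ℝ), 0 < r → (Crd : ℝ≥0∞) * μ (ball x r) ≤ μ (ball x (2 * r))

def IsRegularSet {X : Type*} [MetricSpace X] [MeasurableSpace X]
    (μ : Measure X) (S : Set X) (θ : ℝ≥0) (δ : ℝ) : Prop :=
  ∀ x ∈ S, ∀ r : ℝ, 0 < r → r ≤ δ → μ (ball x r) ≤ (θ : ℝ≥0∞) * μ (ball x r ∩ S)

noncomputable def sharpMax {X : Type*} [MetricSpace X] [MeasurableSpace X]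
    (μ : Measure X) (α : ℝ) (A : Set X) (f : X → ℝ) (x : X) : ℝ≥0∞ :=
  ⨆ (r : ℝ) (_ : 0 < r),
    ENNReal.ofReal (r ^ (-α)) * (μ (ball x r))⁻¹ *
      ∫⁻ y in ball x r ∩ A, ENNReal.ofReal |f y - ⨍ z in ball x r ∩ A, f z ∂μ| ∂μ

noncomputable def eLpNormENN {X : Type*} [MeasurableSpace X] (μ : Measure X)
    (p : ℝ≥0∞) (f : X → ℝ≥0∞) : ℝ≥0∞ :=
  if p = ⊤ then essSup f μ else (∫⁻ x, f x ^ p.toReal ∂μ) ^ (1 / p.toReal)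

noncomputable def distSets {X : Type*} [MetricSpace X] (A B : Set X) : ℝ :=
  sInf (Set.image2 dist A B)

noncomputable def maximalFn {X : Type*} [MetricSpace X] [MeasurableSpace X]
    (μ : Measure X) (f : X → ℝ≥0∞) (x : X) : ℝ≥0∞ :=
  ⨆ (r : ℝ) (_ : 0 < r), (μ (ball x r))⁻¹ * ∫⁻ y in ball x r, f y ∂μ

def IsGenGradOn {X : Type*} [MetricSpace X] [MeasurableSpace X] (μ : Measure X)
    (Y : Set X) (u g : X → ℝ) : Prop :=
  (∀ x ∈ Y, 0 ≤ g x) ∧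
  ∃ E : Set X, E ⊆ Y ∧ μ E = 0 ∧
    ∀ x ∈ Y \ E, ∀ y ∈ Y \ E, |u x - u y| ≤ dist x y * (g x + g y)

def MemHajlasz {X : Type*} [MetricSpace X] [MeasurableSpace X] (μ : Measure X)
    (Y : Set X) (p : ℝ≥0∞) (u : X → ℝ) : Prop :=
  MemLp u p (μ.restrict Y) ∧
  ∃ g : X → ℝ, IsGenGradOn μ Y u g ∧ MemLp g p (μ.restrict Y)

noncomputable def hajlaszNorm {X : Type*} [MetricSpace X] [MeasurableSpace X]
    (μ : Measure X) (Y : Set X) (p : ℝ≥0∞) (u : X → ℝ) : ℝ≥0∞ :=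
  eLpNorm u p (μ.restrict Y) +
    ⨅ (g : X → ℝ) (_ : IsGenGradOn μ Y u g), eLpNorm g p (μ.restrict Y)

open scoped Classical in
noncomputable def extZero {X : Type*} (S : Set X) (u : S → ℝ) : X → ℝ :=
  fun x => if h : x ∈ S then u ⟨x, h⟩ else 0

open Filter Topology TopologicalSpace

namespace IsDoublingMeasure

variable {X : Type*} [MetricSpace X] [MeasurableSpace X] {μ : Measure X} {Cd : ℝ≥0}

lemma measure_ball_two_pow_mul_le (hdbl : IsDoublingMeasure μ Cd) (x : X) {r : ℝ} (hr : 0 < r)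
    (n : ℕ) : μ (ball x (2 ^ n * r)) ≤ Cd ^ n * μ (ball x r) := by
  induction n with
  | zero => simp
  | succ n ih =>
    calc μ (ball x (2 ^ (n + 1) * r)) = μ (ball x (2 * (2 ^ n * r))) := by ring_nf
      _ ≤ Cd * μ (ball x (2 ^ n * r)) := hdbl x _ (by positivity)
      _ ≤ Cd * (Cd ^ n * μ (ball x r)) := by gcongr
      _ = Cd ^ (n + 1) * μ (ball x r) := by ring

lemma exists_measure_ball_le_pow_mul (hdbl : IsDoublingMeasure μ Cd) {r : ℝ} (hr : 0 < r)
    (R : ℝ) : ∃ n : ℕ, ∀ x, μ (ball x R) ≤ Cd ^ n * μ (ball x r) := by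
  obtain ⟨n, hn⟩ := pow_unbounded_of_one_lt (R / r) one_lt_two
  refine ⟨n, fun x => (measure_mono (ball_subset_ball ?_)).trans
    (hdbl.measure_ball_two_pow_mul_le x hr n)⟩
  exact (div_le_iff₀ hr).1 hn.le

lemma measure_ball_pos [NeZero μ] (hdbl : IsDoublingMeasure μ Cd) (x : X) {r : ℝ} (hr : 0 < r) :
    0 < μ (ball x r) := by
  refine pos_iff_ne_zero.2 fun h0 => NeZero.ne μ ?_
  rw [← Measure.measure_univ_eq_zero, ← iUnion_ball_nat x, measure_iUnion_null_iff]
  intro n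
  obtain ⟨k, hk⟩ := hdbl.exists_measure_ball_le_pow_mul hr n
  simpa [h0] using hk x

lemma isUnifLocDoublingMeasure (hdbl : IsDoublingMeasure μ Cd) : IsUnifLocDoublingMeasure μ := by
  refine ⟨⟨Cd ^ 2, eventually_mem_nhdsWithin.mono fun ε (hε : 0 < ε) x => ?_⟩⟩
  calc μ (closedBall x (2 * ε)) ≤ μ (ball x (2 ^ 2 * ε)) :=
        measure_mono (closedBall_subset_ball (by linarith))
    _ ≤ Cd ^ 2 * μ (ball x ε) := hdbl.measure_ball_two_pow_mul_le x hε 2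
    _ ≤ ((Cd ^ 2 : ℝ≥0) : ℝ≥0∞) * μ (closedBall x ε) := by
        push_cast
        gcongr
        exact ball_subset_closedBall

variable [OpensMeasurableSpace X] [NeZero μ]

lemma packingNumber_ball_ne_top (hdbl : IsDoublingMeasure μ Cd)
    (hfin : ∀ s : Set X, IsBounded s → μ s < ⊤) (x₀ : X) (R : ℝ) {ε : ℝ≥0} (hε : ε ≠ 0) :
    packingNumber ε (ball x₀ R) ≠ ⊤ := by
  have hε₂ : (0 : ℝ) < ε / 2 := by positivity
  obtain ⟨k, hk⟩ := hdbl.exists_measure_ball_le_pow_mul hε₂ (R + 1)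
  set m := μ (ball x₀ 1) / Cd ^ k
  have hm : m ≠ 0 := (ENNReal.div_pos (hdbl.measure_ball_pos x₀ one_pos).ne' (by simp)).ne'
  have hM : μ (ball x₀ (R + ε / 2)) ≠ ⊤ := (hfin _ isBounded_ball).ne
  have key : ∀ C ⊆ ball x₀ R, IsSeparated ε C →
      (C.encard : ℝ≥0∞) * m ≤ μ (ball x₀ (R + ε / 2)) := by
    intro C hCA hC
    have hm_le : ∀ c ∈ C, m ≤ μ (ball c (ε / 2)) := fun c hc =>
      ENNReal.div_le_of_le_mul' <| (measure_mono <| ball_subset_ball' <| by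
        linarith [mem_ball'.1 (hCA hc)]).trans (hk c)
    have hdisj : Pairwise (Function.onFun Disjoint fun c : C => ball (c : X) (ε / 2)) := by
      intro c c' hne
      refine ball_disjoint_ball ?_
      have hsep : (ε : ℝ≥0∞) < edist (c : X) c' := hC c.2 c'.2 (Subtype.coe_injective.ne hne)
      rw [edist_dist, ← ENNReal.ofReal_coe_nnreal,
        ENNReal.ofReal_lt_ofReal_iff_of_nonneg ε.coe_nonneg] at hsep
      linarith
    calc (C.encard : ℝ≥0∞) * m = ∑' _ : C, m := (ENNReal.tsum_const m).symm
      _ ≤ ∑' c : C, μ (ball (c : X) (ε / 2)) := ENNReal.tsum_le_tsum fun c => hm_le c c.2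
      _ ≤ μ (⋃ c : C, ball (c : X) (ε / 2)) :=
        tsum_meas_le_meas_iUnion_of_disjoint μ (fun _ => measurableSet_ball) hdisj
      _ ≤ μ (ball x₀ (R + ε / 2)) := measure_mono <| iUnion_subset fun c =>
        ball_subset_ball' <| by linarith [mem_ball.1 (hCA c.2)]
  have hbound : (packingNumber ε (ball x₀ R) : ℝ≥0∞) ≤ μ (ball x₀ (R + ε / 2)) / m := by
    simp only [packingNumber, ENat.toENNReal_iSup, iSup_le_iff]
    exact fun C hCA hC => (ENNReal.le_div_iff_mul_le (Or.inl hm) (Or.inr hM)).2 (key C hCA hC)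
  intro h
  simp only [h, ENat.toENNReal_top, top_le_iff] at hbound
  exact ENNReal.div_lt_top hM hm |>.ne hbound

lemma totallyBounded_ball (hdbl : IsDoublingMeasure μ Cd)
    (hfin : ∀ s : Set X, IsBounded s → μ s < ⊤) (x₀ : X) (R : ℝ) :
    TotallyBounded (ball x₀ R) := by
  refine EMetric.totallyBounded_iff.2 fun ε hε => ?_
  obtain ⟨ε', hε'0, hε'ε⟩ := ENNReal.lt_iff_exists_nnreal_btwn.1 hε
  have hpack := hdbl.packingNumber_ball_ne_top hfin x₀ R (ε := ε') (by exact_mod_cast hε'0.ne')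
  refine ⟨maximalSeparatedSet ε' (ball x₀ R), ?_, ?_⟩
  · exact Set.encard_ne_top_iff.1 ((encard_maximalSeparatedSet hpack).trans_ne hpack)
  · refine (isCover_iff_subset_iUnion_closedEBall.1 (isCover_maximalSeparatedSet hpack)).trans ?_
    exact iUnion₂_mono fun y _ z hz => lt_of_le_of_lt hz hε'ε

lemma secondCountableTopology (hdbl : IsDoublingMeasure μ Cd)
    (hfin : ∀ s : Set X, IsBounded s → μ s < ⊤) : SecondCountableTopology X := by
  obtain ⟨x₀⟩ := Measure.nonempty_of_neZero μ
  suffices SeparableSpace X from UniformSpace.secondCountable_of_separable X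
  rw [← isSeparable_univ_iff, ← iUnion_ball_nat x₀]
  exact .iUnion fun n => (hdbl.totallyBounded_ball hfin x₀ n).isSeparable

end IsDoublingMeasure

lemma IsUnifLocDoublingMeasure.ae_tendsto_measure_inter_closedBall_div_of_notMem
    {α : Type*} [PseudoMetricSpace α] [MeasurableSpace α] [SecondCountableTopology α]
    [BorelSpace α] (μ : Measure α) [IsLocallyFiniteMeasure μ] [IsUnifLocDoublingMeasure μ]
    {S : Set α} (hS : MeasurableSet S) :
    ∀ᵐ x ∂μ, x ∉ S →
      Tendsto (fun r => μ (S ∩ closedBall x r) / μ (closedBall x r)) (𝓝[>] 0) (𝓝 0) := by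
  filter_upwards [(vitaliFamily μ 1).ae_tendsto_measure_inter_div_of_measurableSet hS]
    with x hx hxS
  rw [indicator_of_notMem hxS] at hx
  refine hx.comp (tendsto_closedBall_filterAt μ (fun _ => x) id tendsto_id ?_)
  filter_upwards [self_mem_nhdsWithin] with r (hr : 0 < r)
  simpa using hr.le

lemma IsRegularSet.measure_closedBall_le_of_mem_closure {X : Type*} [MetricSpace X]
    [MeasurableSpace X] {μ : Measure X} {Cd θ : ℝ≥0} {δ : ℝ} {S : Set X}
    (hreg : IsRegularSet μ S θ δ) (hdbl : IsDoublingMeasure μ Cd) {x : X} (hx : x ∈ closure S)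
    {r : ℝ} (hr : 0 < r) (hrδ : r ≤ 2 * δ) :
    μ (closedBall x r) ≤ Cd ^ 2 * θ * μ (S ∩ closedBall x r) := by
  obtain ⟨y, hyS, hxy⟩ := Metric.mem_closure_iff.1 hx (r / 2) (by positivity)
  calc μ (closedBall x r) ≤ μ (ball y (2 ^ 2 * (r / 2))) :=
        measure_mono fun z hz => mem_ball.2 <| by
          linarith [mem_closedBall.1 hz, dist_triangle z x y]
    _ ≤ Cd ^ 2 * μ (ball y (r / 2)) := hdbl.measure_ball_two_pow_mul_le y (by positivity) 2
    _ ≤ Cd ^ 2 * (θ * μ (ball y (r / 2) ∩ S)) := by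
        gcongr
        exact hreg y hyS _ (by positivity) (by linarith)
    _ ≤ Cd ^ 2 * θ * μ (S ∩ closedBall x r) := by
        rw [mul_assoc, inter_comm (ball y _)]
        gcongr
        exact fun z hz => mem_closedBall.2 <| by
          linarith [mem_ball.1 hz, dist_triangle z y x, dist_comm x y]

lemma IsRegularSet.eventually_inv_le_measure_inter_closedBall_div {X : Type*} [MetricSpace X]
    [MeasurableSpace X] {μ : Measure X} [NeZero μ] {Cd θ : ℝ≥0} {δ : ℝ} {S : Set X}
    (hreg : IsRegularSet μ S θ δ) (hδ : 0 < δ) (hdbl : IsDoublingMeasure μ Cd)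
    (hfin : ∀ s : Set X, IsBounded s → μ s < ⊤) {x : X} (hx : x ∈ closure S) :
    ∀ᶠ r in 𝓝[>] 0, ((Cd : ℝ≥0∞) ^ 2 * θ)⁻¹ ≤ μ (S ∩ closedBall x r) / μ (closedBall x r) := by
  filter_upwards [Ioo_mem_nhdsGT (by positivity : (0 : ℝ) < 2 * δ)] with r ⟨hr, hrδ⟩
  have hball := (hdbl.measure_ball_pos x hr).trans_le (measure_mono ball_subset_closedBall)
  rw [ENNReal.le_div_iff_mul_le (Or.inl hball.ne') (Or.inl (hfin _ isBounded_closedBall).ne)]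
  calc _ ≤ ((Cd : ℝ≥0∞) ^ 2 * θ)⁻¹ * (Cd ^ 2 * θ * μ (S ∩ closedBall x r)) := by
        gcongr
        exact hreg.measure_closedBall_le_of_mem_closure hdbl hx hr hrδ.le
    _ ≤ μ (S ∩ closedBall x r) := by
        rw [← mul_assoc]
        exact mul_le_of_le_one_left' (ENNReal.inv_mul_le_one _)

theorem measure_closure_diff_regular_set_general
    (Cd θ : ℝ≥0) (δ : ℝ) (hδ : 0 < δ)
    {X : Type*} [MetricSpace X] [MeasurableSpace X] [BorelSpace X]
    (μ : Measure X) (hfin : ∀ s : Set X, IsBounded s → μ s < ⊤)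
    (hdbl : IsDoublingMeasure μ Cd)
    (S : Set X) (hSmeas : MeasurableSet S) (hreg : IsRegularSet μ S θ δ) :
    μ (closure S \ S) = 0 := by
  rcases eq_zero_or_neZero μ with rfl | _
  · rfl
  have : IsLocallyFiniteMeasure μ :=
    ⟨fun x => ⟨ball x 1, ball_mem_nhds x one_pos, hfin _ isBounded_ball⟩⟩
  have := hdbl.secondCountableTopology hfin
  have := hdbl.isUnifLocDoublingMeasure
  refine measure_mono_null (fun x ⟨hxS, hxnS⟩ => ?_) <| ae_iff.1 <|
    IsUnifLocDoublingMeasure.ae_tendsto_measure_inter_closedBall_div_of_notMem μ hSmeas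
  intro htends
  have hzero : ((Cd : ℝ≥0∞) ^ 2 * θ)⁻¹ ≤ 0 := ge_of_tendsto (htends hxnS) <|
    hreg.eventually_inv_le_measure_inter_closedBall_div hδ hdbl hfin hxS
  simp [ENNReal.mul_eq_top] at hzero

/-- Lemma 2.1: a regular subset of a doubling metric measure
space has `μ(cl(S) ∖ S) = 0`. -/
theorem measure_closure_diff_regular_set
    (Cd θ : ℝ≥0) (δ : ℝ) (hCd : 1 ≤ Cd) (hθ : 1 ≤ θ) (hδ : 0 < δ)
    {X : Type*} [MetricSpace X] [MeasurableSpace X] [BorelSpace X]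
    (μ : Measure X) (hfin : ∀ s : Set X, IsBounded s → μ s < ⊤)
    (hdbl : IsDoublingMeasure μ Cd)
    (S : Set X) (hSmeas : MeasurableSet S) (hreg : IsRegularSet μ S θ δ) :
    μ (closure S \ S) = 0 :=
  measure_closure_diff_regular_set_general Cd θ δ hδ μ hfin hdbl S hSmeas hreg
end

section
/- Let (X,d,μ) be a metric measure space with μ doubling with constant C_d and satisfying the reverse doubling condition with constant C_rd, let S ⊂ X be a closed regular set with constants θ_S, δ_S, and let W_S be a countable family of balls such that the union of the balls in W_S equals X ∖ S, r_B ≤ dist(B, S) ≤ 4 r_B for every B = B(x_B,r_B) ∈ W_S, and every point of X ∖ S lies in at most N₀ balls of W_S. Then there exist constants γ₁, γ₂, γ₃ > 0 depending only on C_d, C_rd, θ_S and N₀, and a family of Borel sets {H_B : B ∈ W_S} such that: (i) H_B ⊂ (γ₁ B) ∩ S for every B ∈ W_S; (ii) μ(B) ≤ γ₂ μ(H_B) whenever B ∈ W_S and r_B ≤ δ_S; and (iii) Σ_{B ∈ W_S} χ_{H_B}(x) ≤ γ₃ for every x ∈ X, where χ_E denotes the characteristic function of E. -/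
open MeasureTheory Metric Set NNReal ENNReal Bornology

/-!
For a Whitney ball `B(x, r)` pick `y ∈ S` with `d(x, y) < 6r` and let `H_B` be `B(y, r / 2^m) ∩ S`
with the balls `B(y', r' / 2^m)` of all Whitney balls satisfying `2^m r' ≤ r` removed.

If a point lies in `H_B` and `H_B'`, the removal forces `r < 2^m r'` and `r' < 2^m r`; so the
Whitney balls whose `H_B` contain a given point have comparable radii and all lie in one ball of
comparable size, and bounded overlap together with doubling bounds their number.

For the measure bound, the removed balls meeting `B(y, r / 2^m)` come from Whitney balls of radius
at most `r / 2^m` lying in `B(y, 16 r / 2^m)`; by reverse doubling, bounded overlap and doubling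
their total measure is at most `C_rd^{-m} C_d^7 N₀ μ(B(y, r / 2^m))`. Choosing
`C_rd^m > 2 θ C_d^7 N₀`, regularity of `S` shows that `H_B` keeps a `1 / (2θ)` share of
`μ(B(y, r / 2^m))`, which is comparable to `μ(B)` by doubling.
-/

namespace IsDoublingMeasure

variable {X : Type*} [MetricSpace X] [MeasurableSpace X] {μ : Measure X} {Cd : ℝ≥0}

theorem measure_ball_two_pow_mul_le_s12 (hd : IsDoublingMeasure μ Cd) (z : X) {s : ℝ} (hs : 0 < s)
    (k : ℕ) : μ (ball z (2 ^ k * s)) ≤ (Cd : ℝ≥0∞) ^ k * μ (ball z s) := by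
  induction k with
  | zero => simp
  | succ k ih =>
    calc μ (ball z (2 ^ (k + 1) * s)) = μ (ball z (2 * (2 ^ k * s))) := by ring_nf
      _ ≤ Cd * μ (ball z (2 ^ k * s)) := hd z _ (by positivity)
      _ ≤ Cd * (Cd ^ k * μ (ball z s)) := by gcongr
      _ = Cd ^ (k + 1) * μ (ball z s) := by ring

theorem measure_le_of_subset_ball (hd : IsDoublingMeasure μ Cd) {A : Set X} {z : X} {s : ℝ}
    (hs : 0 < s) {k : ℕ} (hA : A ⊆ ball z (2 ^ k * s)) :
    μ A ≤ (Cd : ℝ≥0∞) ^ k * μ (ball z s) :=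
  (measure_mono hA).trans (hd.measure_ball_two_pow_mul_le_s12 z hs k)

theorem measure_ball_ne_zero (hd : IsDoublingMeasure μ Cd) {x₀ : X} {r₀ : ℝ}
    (h₀ : μ (ball x₀ r₀) ≠ 0) (z : X) {r : ℝ} (hr : 0 < r) : μ (ball z r) ≠ 0 := by
  obtain ⟨k, hk⟩ := pow_unbounded_of_one_lt ((r₀ + dist x₀ z) / r) one_lt_two
  rw [div_lt_iff₀ hr] at hk
  have hsub : ball x₀ r₀ ⊆ ball z (2 ^ k * r) := ball_subset_ball' hk.le
  intro hz
  exact h₀ (by simpa [hz] using hd.measure_le_of_subset_ball hr hsub)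

end IsDoublingMeasure

theorem IsRevDoublingMeasure.pow_mul_measure_ball_le {X : Type*} [MetricSpace X]
    [MeasurableSpace X] {μ : Measure X} {Crd : ℝ≥0} (hrd : IsRevDoublingMeasure μ Crd) (z : X)
    {s : ℝ} (hs : 0 < s) (k : ℕ) : (Crd : ℝ≥0∞) ^ k * μ (ball z s) ≤ μ (ball z (2 ^ k * s)) := by
  induction k with
  | zero => simp
  | succ k ih =>
    calc (Crd : ℝ≥0∞) ^ (k + 1) * μ (ball z s) = Crd * (Crd ^ k * μ (ball z s)) := by ring
      _ ≤ Crd * μ (ball z (2 ^ k * s)) := by gcongr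
      _ ≤ μ (ball z (2 * (2 ^ k * s))) := hrd z _ (by positivity)
      _ = μ (ball z (2 ^ (k + 1) * s)) := by ring_nf

section BoundedOverlap

variable {X ι : Type*} [MeasurableSpace X] (μ : Measure X) {B : ι → Set X} {W : Set ι} {N : ℕ}
  {A : Set X}

theorem sum_measure_le_of_encard_le (hB : ∀ i ∈ W, MeasurableSet (B i))
    (hover : ∀ x, {i ∈ W | x ∈ B i}.encard ≤ N) {F : Finset ι} (hFW : ↑F ⊆ W)
    (hsub : ∀ i ∈ F, B i ⊆ A) : ∑ i ∈ F, μ (B i) ≤ N * μ A := by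
  classical
  have hcount : ∀ x, ∑ i ∈ F, (B i).indicator (1 : X → ℝ≥0∞) x ≤ N := by
    intro x
    have hcard : ({i ∈ F | x ∈ B i}.card : ℕ∞) ≤ N := by
      rw [← Set.encard_coe_eq_coe_finsetCard, Finset.coe_filter]
      refine (Set.encard_mono ?_).trans (hover x)
      exact fun i hi => ⟨hFW hi.1, hi.2⟩
    simp only [Set.indicator_apply, Pi.one_apply, Finset.sum_boole]
    exact_mod_cast hcard
  calc ∑ i ∈ F, μ (B i) = ∑ i ∈ F, μ.restrict A (B i) :=
        Finset.sum_congr rfl fun i hi => (Measure.restrict_eq_self μ (hsub i hi)).symm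
    _ = ∫⁻ x, ∑ i ∈ F, (B i).indicator 1 x ∂μ.restrict A := by
        rw [lintegral_finsetSum _ fun i hi => measurable_one.indicator (hB i (hFW hi))]
        exact Finset.sum_congr rfl fun i hi => (lintegral_indicator_one (hB i (hFW hi))).symm
    _ ≤ ∫⁻ _, (N : ℝ≥0∞) ∂μ.restrict A := lintegral_mono hcount
    _ = N * μ A := by rw [lintegral_const, Measure.restrict_apply_univ]

theorem tsum_measure_le_of_encard_le (hB : ∀ i ∈ W, MeasurableSet (B i))
    (hover : ∀ x, {i ∈ W | x ∈ B i}.encard ≤ N) {V : Set ι} (hVW : V ⊆ W)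
    (hsub : ∀ i ∈ V, B i ⊆ A) : ∑' i : V, μ (B i) ≤ N * μ A := by
  classical
  rw [ENNReal.tsum_eq_iSup_sum]
  refine iSup_le fun F => ?_
  rw [show ∑ i ∈ F, μ (B i) = ∑ i ∈ F.map (Function.Embedding.subtype _), μ (B i) from
    by rw [Finset.sum_map]; rfl]
  refine sum_measure_le_of_encard_le μ hB hover ?_ ?_ <;>
    simp only [Finset.coe_map, Finset.mem_map, Function.Embedding.coe_subtype]
  · rintro _ ⟨i, -, rfl⟩
    exact hVW i.2
  · rintro _ ⟨i, -, rfl⟩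
    exact hsub i i.2

theorem encard_le_of_measure_le (hB : ∀ i ∈ W, MeasurableSet (B i))
    (hover : ∀ x, {i ∈ W | x ∈ B i}.encard ≤ N) {D : Set ι} (hDW : D ⊆ W)
    (hsub : ∀ i ∈ D, B i ⊆ A) {K : ℕ} (hK : ∀ i ∈ D, μ A ≤ K * μ (B i)) (hA₀ : μ A ≠ 0)
    (hA : μ A ≠ ⊤) : D.encard ≤ K * N := by
  by_contra! hlt
  obtain ⟨t, htD, ht⟩ := Set.exists_subset_encard_eq (Order.add_one_le_of_lt hlt)
  have htfin : t.Finite := Set.finite_of_encard_eq_coe ht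
  have hcard : htfin.toFinset.card = K * N + 1 := by
    rw [htfin.encard_eq_coe_toFinset_card] at ht
    exact_mod_cast ht
  have hFD : ↑htfin.toFinset ⊆ D := by simpa using htD
  have key : ((K * N + 1 : ℕ) : ℝ≥0∞) * μ A ≤ (K * N : ℕ) * μ A :=
    calc ((K * N + 1 : ℕ) : ℝ≥0∞) * μ A = ∑ _ ∈ htfin.toFinset, μ A := by
          rw [Finset.sum_const, hcard, nsmul_eq_mul]
      _ ≤ ∑ i ∈ htfin.toFinset, K * μ (B i) := Finset.sum_le_sum fun i hi => hK i (hFD hi)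
      _ = K * ∑ i ∈ htfin.toFinset, μ (B i) := (Finset.mul_sum ..).symm
      _ ≤ K * (N * μ A) := by
          gcongr
          exact sum_measure_le_of_encard_le μ hB hover (hFD.trans hDW) fun i hi =>
            hsub i (hFD hi)
      _ = (K * N : ℕ) * μ A := by push_cast; ring
  have := (ENNReal.mul_le_mul_iff_left hA₀ hA).mp key
  norm_cast at this
  omega

end BoundedOverlap

theorem measure_le_two_mul_measure_inter_diff {X : Type*} [MeasurableSpace X] {μ : Measure X}
    {B S U : Set X} {θ : ℝ≥0∞} (hreg : μ B ≤ θ * μ (B ∩ S)) (hU : 2 * θ * μ (U ∩ B) ≤ μ B)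
    (hB : μ B ≠ ⊤) : μ B ≤ 2 * θ * μ ((B ∩ S) \ U) := by
  have hsplit : μ (B ∩ S) ≤ μ ((B ∩ S) \ U) + μ (U ∩ B) := by
    rw [add_comm]
    refine (measure_le_inter_add_sdiff μ (B ∩ S) U).trans (add_le_add_left (measure_mono ?_) _)
    exact fun x hx => ⟨hx.2, hx.1.1⟩
  refine ENNReal.le_of_add_le_add_right hB ?_
  calc μ B + μ B ≤ 2 * θ * μ (B ∩ S) := by rw [← two_mul, mul_assoc]; gcongr
    _ ≤ 2 * θ * μ ((B ∩ S) \ U) + 2 * θ * μ (U ∩ B) := by rw [← mul_add]; gcongr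
    _ ≤ 2 * θ * μ ((B ∩ S) \ U) + μ B := by gcongr

theorem exists_dist_lt_of_distSets_lt {X : Type*} [MetricSpace X] {A S : Set X} {t : ℝ}
    (h₀ : 0 < distSets A S) (ht : distSets A S < t) : ∃ a ∈ A, ∃ b ∈ S, dist a b < t := by
  have hne : (image2 dist A S).Nonempty :=
    nonempty_iff_ne_empty.mpr fun h => by simp [distSets, h] at h₀
  have hbdd : BddBelow (image2 dist A S) := ⟨0, by rintro _ ⟨a, -, b, -, rfl⟩; exact dist_nonneg⟩
  obtain ⟨_, ⟨a, ha, b, hb, rfl⟩, hab⟩ := (csInf_lt_iff hbdd hne).mp ht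
  exact ⟨a, ha, b, hb, hab⟩

theorem exists_mem_dist_lt_of_distSets_ball_le {X : Type*} [MetricSpace X] {S : Set X} {x : X}
    {r : ℝ} (hr : 0 < r) (hlow : r ≤ distSets (ball x r) S) (hup : distSets (ball x r) S ≤ 4 * r) :
    ∃ b ∈ S, dist x b < 6 * r := by
  obtain ⟨a, ha, b, hb, hab⟩ := exists_dist_lt_of_distSets_lt (hr.trans_le hlow)
    (hup.trans_lt (by linarith : 4 * r < 5 * r))
  have hxa : dist x a < r := by rw [dist_comm]; exact ha
  exact ⟨b, hb, by linarith [dist_triangle x a b]⟩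

theorem encard_mem_ball_le_of_iUnion_subset_compl {X : Type*} [MetricSpace X] {S : Set X}
    {W : Set (X × ℝ)} {N : ℕ∞} (hcov : (⋃ p ∈ W, ball p.1 p.2) ⊆ Sᶜ)
    (hover : ∀ x ∉ S, {p ∈ W | x ∈ ball p.1 p.2}.encard ≤ N) (x : X) :
    {p ∈ W | x ∈ ball p.1 p.2}.encard ≤ N := by
  by_cases hx : x ∈ S
  · have hempty : {p ∈ W | x ∈ ball p.1 p.2} = ∅ :=
      eq_empty_of_forall_notMem fun p ⟨hp, hxp⟩ => hcov (mem_biUnion hp hxp) hx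
    rw [hempty, Set.encard_empty]
    exact zero_le
  · exact hover x hx

section ReflectedQuasiball

variable {X : Type*} [MetricSpace X]

def smallerReflectedBalls (W : Set (X × ℝ)) (y : X × ℝ → X) (m : ℕ) (p : X × ℝ) : Set X :=
  ⋃ q ∈ {q ∈ W | 2 ^ m * q.2 ≤ p.2}, ball (y q) (q.2 / 2 ^ m)

def reflectedQuasiball (W : Set (X × ℝ)) (S : Set X) (y : X × ℝ → X) (m : ℕ) (p : X × ℝ) :
    Set X :=
  (ball (y p) (p.2 / 2 ^ m) ∩ S) \ smallerReflectedBalls W y m p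

variable {W : Set (X × ℝ)} {S : Set X} {y : X × ℝ → X} {m : ℕ}

theorem measurableSet_reflectedQuasiball [MeasurableSpace X] [OpensMeasurableSpace X]
    (hS : MeasurableSet S) (hW : W.Countable) (p : X × ℝ) :
    MeasurableSet (reflectedQuasiball W S y m p) :=
  (measurableSet_ball.inter hS).diff <|
    .biUnion (hW.mono (sep_subset _ _)) fun _ _ => measurableSet_ball

theorem reflectedQuasiball_subset {p : X × ℝ} (hp : 0 < p.2) (hy : dist p.1 (y p) < 6 * p.2) :
    reflectedQuasiball W S y m p ⊆ ball p.1 (7 * p.2) ∩ S := by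
  have hrad : p.2 / 2 ^ m ≤ p.2 := div_le_self hp.le (one_le_pow₀ one_le_two)
  refine fun x hx => ⟨ball_subset_ball' ?_ hx.1.1, hx.1.2⟩
  rw [dist_comm]
  linarith

theorem radius_lt_of_mem_reflectedQuasiball {p q : X × ℝ} {x : X} (hq : q ∈ W)
    (hxp : x ∈ reflectedQuasiball W S y m p) (hxq : x ∈ reflectedQuasiball W S y m q) :
    p.2 < 2 ^ m * q.2 := by
  by_contra! h
  exact hxp.2 (mem_biUnion ⟨hq, h⟩ hxq.1.1)

variable [MeasurableSpace X] {μ : Measure X} {Cd Crd : ℝ≥0}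

theorem pow_mul_measure_ball_div_le (hd : IsDoublingMeasure μ Cd)
    (hrd : IsRevDoublingMeasure μ Crd) {q : X × ℝ} (hq : 0 < q.2)
    (hy : dist q.1 (y q) < 6 * q.2) :
    (Crd : ℝ≥0∞) ^ m * μ (ball (y q) (q.2 / 2 ^ m)) ≤ Cd ^ 3 * μ (ball q.1 q.2) := by
  have hsub : ball (y q) q.2 ⊆ ball q.1 (2 ^ 3 * q.2) := by
    refine ball_subset_ball' ?_
    rw [dist_comm]
    linarith
  calc (Crd : ℝ≥0∞) ^ m * μ (ball (y q) (q.2 / 2 ^ m))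
      ≤ μ (ball (y q) (2 ^ m * (q.2 / 2 ^ m))) := hrd.pow_mul_measure_ball_le _ (by positivity) m
    _ = μ (ball (y q) q.2) := by rw [mul_div_cancel₀ _ (by positivity)]
    _ ≤ Cd ^ 3 * μ (ball q.1 q.2) := hd.measure_le_of_subset_ball hq hsub

variable [OpensMeasurableSpace X] {N₀ : ℕ}

theorem pow_mul_measure_removed_le (hd : IsDoublingMeasure μ Cd)
    (hrd : IsRevDoublingMeasure μ Crd) (hWc : W.Countable)
    (hW : ∀ q ∈ W, 0 < q.2 ∧ dist q.1 (y q) < 6 * q.2)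
    (hover : ∀ x, {q ∈ W | x ∈ ball q.1 q.2}.encard ≤ N₀) {p : X × ℝ} (hp : 0 < p.2) :
    (Crd : ℝ≥0∞) ^ m * μ (smallerReflectedBalls W y m p ∩ ball (y p) (p.2 / 2 ^ m)) ≤
      Cd ^ 7 * N₀ * μ (ball (y p) (p.2 / 2 ^ m)) := by
  set τ := p.2 / 2 ^ m with hτ
  have hτpos : 0 < τ := by positivity
  set T := {q ∈ W | 2 ^ m * q.2 ≤ p.2 ∧ (ball (y q) (q.2 / 2 ^ m) ∩ ball (y p) τ).Nonempty}
  have hTW : T ⊆ W := fun q hq => hq.1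
  have hcover : smallerReflectedBalls W y m p ∩ ball (y p) τ ⊆
      ⋃ q ∈ T, ball (y q) (q.2 / 2 ^ m) := by
    rintro z ⟨hz, hzp⟩
    obtain ⟨q, hq, hzq⟩ := mem_iUnion₂.mp hz
    exact mem_biUnion ⟨hq.1, hq.2, z, hzq, hzp⟩ hzq
  have hsubT : ∀ q ∈ T, ball q.1 q.2 ⊆ ball (y p) (2 ^ 4 * τ) := by
    rintro q ⟨hqW, hqp, w, hwq, hwp⟩
    have hqτ : q.2 ≤ τ := by rw [hτ, le_div_iff₀ (by positivity)]; linarith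
    have hq := hW q hqW
    have hrad : q.2 / 2 ^ m ≤ q.2 := div_le_self hq.1.le (one_le_pow₀ one_le_two)
    refine ball_subset_ball' ?_
    have := dist_triangle4 q.1 (y q) w (y p)
    rw [mem_ball, dist_comm] at hwq
    rw [mem_ball] at hwp
    linarith
  calc (Crd : ℝ≥0∞) ^ m * μ (smallerReflectedBalls W y m p ∩ ball (y p) τ)
      ≤ Crd ^ m * ∑' q : T, μ (ball (y q) (q.1.2 / 2 ^ m)) :=
        by gcongr; exact (measure_mono hcover).trans (measure_biUnion_le μ (hWc.mono hTW) _)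
    _ = ∑' q : T, Crd ^ m * μ (ball (y q) (q.1.2 / 2 ^ m)) := ENNReal.tsum_mul_left.symm
    _ ≤ ∑' q : T, Cd ^ 3 * μ (ball q.1.1 q.1.2) := ENNReal.tsum_le_tsum fun q =>
        pow_mul_measure_ball_div_le hd hrd (hW q q.2.1).1 (hW q q.2.1).2
    _ = Cd ^ 3 * ∑' q : T, μ (ball q.1.1 q.1.2) := ENNReal.tsum_mul_left
    _ ≤ Cd ^ 3 * (N₀ * μ (ball (y p) (2 ^ 4 * τ))) := by
        gcongr
        exact tsum_measure_le_of_encard_le μ (fun _ _ => measurableSet_ball) hover hTW hsubT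
    _ ≤ Cd ^ 3 * (N₀ * (Cd ^ 4 * μ (ball (y p) τ))) := by
        gcongr
        exact hd.measure_ball_two_pow_mul_le_s12 _ hτpos 4
    _ = Cd ^ 7 * N₀ * μ (ball (y p) τ) := by ring

theorem measure_ball_le_mul_measure_reflectedQuasiball {θ : ℝ≥0} {δ : ℝ}
    (hd : IsDoublingMeasure μ Cd) (hrd : IsRevDoublingMeasure μ Crd)
    (hreg : IsRegularSet μ S θ δ) (hfin : ∀ z r, μ (ball z r) ≠ ⊤) (hWc : W.Countable)
    (hW : ∀ q ∈ W, 0 < q.2 ∧ dist q.1 (y q) < 6 * q.2)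
    (hover : ∀ x, {q ∈ W | x ∈ ball q.1 q.2}.encard ≤ N₀)
    (hm : 2 * θ * Cd ^ 7 * N₀ < (Crd : ℝ≥0∞) ^ m) {p : X × ℝ} (hp : p ∈ W) (hyp : y p ∈ S)
    (hpδ : p.2 ≤ δ) :
    μ (ball p.1 p.2) ≤ 2 * θ * Cd ^ (m + 3) * μ (reflectedQuasiball W S y m p) := by
  obtain ⟨hp₀, hpy⟩ := hW p hp
  set τ := p.2 / 2 ^ m with hτ
  have hτ₀ : 0 < τ := by positivity
  have hτδ : τ ≤ δ := (div_le_self hp₀.le (one_le_pow₀ one_le_two)).trans hpδ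
  have hsmall :
      2 * θ * μ (smallerReflectedBalls W y m p ∩ ball (y p) τ) ≤ μ (ball (y p) τ) := by
    rw [← ENNReal.mul_le_mul_iff_right (pos_of_gt hm).ne' (ENNReal.pow_ne_top ENNReal.coe_ne_top)]
    calc (Crd : ℝ≥0∞) ^ m * (2 * θ * μ (smallerReflectedBalls W y m p ∩ ball (y p) τ))
        = 2 * θ * (Crd ^ m * μ (smallerReflectedBalls W y m p ∩ ball (y p) τ)) := by ring
      _ ≤ 2 * θ * (Cd ^ 7 * N₀ * μ (ball (y p) τ)) :=
          mul_le_mul_right (pow_mul_measure_removed_le hd hrd hWc hW hover hp₀) _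
      _ = 2 * θ * Cd ^ 7 * N₀ * μ (ball (y p) τ) := by ring
      _ ≤ Crd ^ m * μ (ball (y p) τ) := by gcongr
  have hsub : ball p.1 p.2 ⊆ ball (y p) (2 ^ (m + 3) * τ) := by
    have h8 : (2 : ℝ) ^ (m + 3) * τ = 8 * p.2 := by
      rw [hτ, pow_add]
      field_simp
      norm_num
    refine ball_subset_ball' ?_
    linarith
  calc μ (ball p.1 p.2) ≤ Cd ^ (m + 3) * μ (ball (y p) τ) := hd.measure_le_of_subset_ball hτ₀ hsub
    _ ≤ Cd ^ (m + 3) * (2 * θ * μ (reflectedQuasiball W S y m p)) := by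
        gcongr
        exact measure_le_two_mul_measure_inter_diff (hreg _ hyp τ hτ₀ hτδ) hsmall (hfin _ _)
    _ = 2 * θ * Cd ^ (m + 3) * μ (reflectedQuasiball W S y m p) := by ring

theorem encard_mem_reflectedQuasiball_le (hd : IsDoublingMeasure μ Cd)
    (hfin : ∀ z r, μ (ball z r) ≠ ⊤) (hpos : ∀ z r, 0 < r → μ (ball z r) ≠ 0)
    (hW : ∀ q ∈ W, 0 < q.2 ∧ dist q.1 (y q) < 6 * q.2)
    (hover : ∀ x, {q ∈ W | x ∈ ball q.1 q.2}.encard ≤ N₀) (x : X) :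
    {p ∈ W | x ∈ reflectedQuasiball W S y m p}.encard ≤ ⌈Cd⌉₊ ^ (2 * m + 4) * N₀ := by
  rcases eq_empty_or_nonempty {p ∈ W | x ∈ reflectedQuasiball W S y m p} with hD | ⟨p₀, hp₀, hxp₀⟩
  · simp [hD]
  have hnear : ∀ p ∈ {p ∈ W | x ∈ reflectedQuasiball W S y m p},
      dist x p.1 < 7 * p.2 ∧ p.2 < 2 ^ m * p₀.2 ∧ p₀.2 < 2 ^ m * p.2 := fun p ⟨hp, hxp⟩ =>
    ⟨(reflectedQuasiball_subset (hW p hp).1 (hW p hp).2 hxp).1,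
      radius_lt_of_mem_reflectedQuasiball hp₀ hxp hxp₀,
      radius_lt_of_mem_reflectedQuasiball hp hxp₀ hxp⟩
  have hr₀ : 0 < p₀.2 := (hW p₀ hp₀).1
  have h2m : (1 : ℝ) ≤ 2 ^ m := one_le_pow₀ one_le_two
  refine encard_le_of_measure_le μ (fun _ _ => measurableSet_ball) hover (sep_subset _ _)
    (A := ball x (2 ^ (m + 3) * p₀.2)) (fun p hp => ball_subset_ball' ?_) (fun p hp => ?_)
    (hpos _ _ (by positivity)) (hfin _ _)
  · obtain ⟨h7, hlt, -⟩ := hnear p hp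
    rw [dist_comm, pow_add]
    nlinarith [(hW p hp.1).1]
  · obtain ⟨h7, -, hlt⟩ := hnear p hp
    have hsub : ball x (2 ^ (m + 3) * p₀.2) ⊆ ball p.1 (2 ^ (2 * m + 4) * p.2) := by
      refine ball_subset_ball' ?_
      rw [show (2 : ℝ) ^ (2 * m + 4) = 2 * 2 ^ 3 * 2 ^ m * 2 ^ m by ring, pow_add]
      nlinarith [(hW p hp.1).1]
    calc μ (ball x (2 ^ (m + 3) * p₀.2)) ≤ Cd ^ (2 * m + 4) * μ (ball p.1 p.2) :=
          hd.measure_le_of_subset_ball (hW p hp.1).1 hsub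
      _ ≤ (⌈Cd⌉₊ ^ (2 * m + 4) : ℕ) * μ (ball p.1 p.2) := by
          gcongr
          push_cast
          gcongr
          exact_mod_cast Nat.le_ceil Cd

end ReflectedQuasiball

/-- Theorem 2.5: existence of the family of "reflected
quasi-balls" `{H_B : B ∈ W_S}` associated to a Whitney covering of the
complement of a closed regular set. -/
theorem reflected_quasiballs_exist
    (Cd Crd θ : ℝ≥0) (hCd : 1 ≤ Cd) (hCrd : 1 < Crd) (hθ : 1 ≤ θ) (N₀ : ℕ) :
    ∃ (γ₁ : ℝ) (γ₂ : ℝ≥0) (γ₃ : ℕ), 0 < γ₁ ∧ 0 < γ₂ ∧ 0 < γ₃ ∧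
      ∀ (δ : ℝ), 0 < δ →
      ∀ (X : Type*) [MetricSpace X] [MeasurableSpace X] [BorelSpace X]
        (μ : Measure X), (∀ s : Set X, IsBounded s → μ s < ⊤) →
        IsDoublingMeasure μ Cd → IsRevDoublingMeasure μ Crd →
        ∀ S : Set X, IsClosed S → IsRegularSet μ S θ δ →
        ∀ W : Set (X × ℝ), W.Countable →
          (⋃ p ∈ W, ball p.1 p.2) = Sᶜ →
          (∀ p ∈ W, 0 < p.2 ∧ p.2 ≤ distSets (ball p.1 p.2) S ∧
            distSets (ball p.1 p.2) S ≤ 4 * p.2) →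
          (∀ x ∉ S, {p ∈ W | x ∈ ball p.1 p.2}.encard ≤ N₀) →
          ∃ H : X × ℝ → Set X,
            (∀ p ∈ W, MeasurableSet (H p) ∧ H p ⊆ ball p.1 (γ₁ * p.2) ∩ S) ∧
            (∀ p ∈ W, p.2 ≤ δ → μ (ball p.1 p.2) ≤ (γ₂ : ℝ≥0∞) * μ (H p)) ∧
            (∀ x : X, {p ∈ W | x ∈ H p}.encard ≤ γ₃) := by
  obtain ⟨m, hm⟩ := pow_unbounded_of_one_lt (2 * θ * Cd ^ 7 * N₀) hCrd
  refine ⟨7, 2 * θ * Cd ^ (m + 3), ⌈Cd⌉₊ ^ (2 * m + 4) * N₀ + 1, by norm_num, by positivity,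
    by positivity, ?_⟩
  intro δ _ X _ _ _ μ hbdd hd hrd S hS hreg W hWc hcov hWhit hover
  have hfin : ∀ z r, μ (ball z r) ≠ ⊤ := fun z r => (hbdd _ isBounded_ball).ne
  have hover' := encard_mem_ball_le_of_iUnion_subset_compl hcov.le hover
  choose y hy using fun p : X × ℝ => (em (p ∈ W)).elim
    (fun hp => (exists_mem_dist_lt_of_distSets_ball_le (hWhit p hp).1 (hWhit p hp).2.1
      (hWhit p hp).2.2).imp fun _ h _ => h)
    fun hp => ⟨p.1, fun h => absurd h hp⟩
  have hW : ∀ p ∈ W, 0 < p.2 ∧ dist p.1 (y p) < 6 * p.2 :=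
    fun p hp => ⟨(hWhit p hp).1, (hy p hp).2⟩
  by_cases hμ : ∀ z r, 0 < r → μ (ball z r) = 0
  · exact ⟨fun _ => ∅, by simp, fun p hp _ => by simp [hμ p.1 p.2 (hW p hp).1], by simp⟩
  obtain ⟨z, r, -, hzr⟩ : ∃ z r, 0 < r ∧ μ (ball z r) ≠ 0 := by simpa using hμ
  refine ⟨reflectedQuasiball W S y m, fun p hp => ⟨measurableSet_reflectedQuasiball
      hS.measurableSet hWc p, reflectedQuasiball_subset (hW p hp).1 (hW p hp).2⟩,
    fun p hp hpδ => measure_ball_le_mul_measure_reflectedQuasiball hd hrd hreg hfin hWc hW hover'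
      (by exact_mod_cast hm) hp (hy p hp).1 hpδ,
    fun x => (encard_mem_reflectedQuasiball_le hd hfin
      (fun _ _ => hd.measure_ball_ne_zero hzr _) hW hover' x).trans ?_⟩
  exact_mod_cast Nat.le_succ _
end
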